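/- arXiv:2603.12006 — 2 statements merged into one kernel-verified Lean document; each statement's English description precedes it below -/
import Mathlib

section
/- For every n ≥ 2 and every non-corner vertex x ∈ V_{SG_n}, the graph Laplacian of the distance-to-corners function satisfies Δ_n d_n(x) = 8 − 3·id_n(x). -/
open scoped Classical BigOperators ENNReal

noncomputable section

/-- Points of the plane. -/
abbrev Pt : Type := ℝ × ℝ

/-- Bottom-left corner `A`. -/
def u1 : Pt := (0, 0)
/-- Top corner `C`. -/
def u2 : Pt := (1/2, Real.sqrt 3 / 2)
/-- Bottom-right corner `B`. -/
def u3 : Pt := (1, 0)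

/-- The three corners of the gasket. -/
def corners : Set Pt := {u1, u2, u3}

/-- Vertex set of the `n`-th Sierpinski gasket approximation graph `SG_n`. -/
def V : ℕ → Set Pt
  | 0 => {u1, u2, u3}
  | n + 1 =>
      (fun p : Pt => (2:ℝ)⁻¹ • p) ''
        (V n ∪ (fun p => u2 + p) '' V n ∪ (fun p => u3 + p) '' V n)

/-- Edge set (as ordered pairs) of `SG_n`. -/
def Ed : ℕ → Set (Pt × Pt)
  | 0 => {(u1, u2), (u2, u3), (u1, u3)}
  | n + 1 =>
      (fun q : Pt × Pt => ((2:ℝ)⁻¹ • q.1, (2:ℝ)⁻¹ • q.2)) ''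
        (Ed n ∪ (fun q : Pt × Pt => (u2 + q.1, u2 + q.2)) '' Ed n ∪
          (fun q : Pt × Pt => (u3 + q.1, u3 + q.2)) '' Ed n)

/-- The `n`-th Sierpinski gasket approximation graph, as a simple graph on the plane
(vertices outside `V n` are isolated). -/
def SG (n : ℕ) : SimpleGraph Pt where
  Adj x y := ((x, y) ∈ Ed n ∨ (y, x) ∈ Ed n) ∧ x ≠ y
  symm := ⟨fun x y h => ⟨h.1.symm, h.2.symm⟩⟩
  loopless := ⟨fun _ h => h.2 rfl⟩

/-- Graph distance on `SG_n`. -/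
def gdist (n : ℕ) (x y : Pt) : ℕ := (SG n).dist x y

/-- `d_n x`: graph distance from `x` to the nearest corner of `SG_n`. -/
def dcorner (n : ℕ) (x : Pt) : ℕ :=
  min (gdist n x u1) (min (gdist n x u2) (gdist n x u3))

/-- Graph Laplacian of `SG_n` at a (non-corner, degree 4) vertex `x`:
`Δ_n f x = 4 f x - ∑_{y ∼ x} f y`. -/
def lap (n : ℕ) (f : Pt → ℝ) (x : Pt) : ℝ :=
  4 * f x - ∑ᶠ (y : Pt) (_ : (SG n).Adj x y), f y

/-- `g : Pt → Pt → ℝ` is the Green function of `SG_n` (stopped at the corners):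
it vanishes whenever one argument is a corner, and for every non-corner vertex `y`
the function `x ↦ g x y` has Laplacian `δ_y` at every non-corner vertex `x`. -/
def IsGreen (n : ℕ) (g : Pt → Pt → ℝ) : Prop :=
  (∀ x y : Pt, x ∈ corners ∨ y ∈ corners → g x y = 0) ∧
    ∀ y ∈ V n, y ∉ corners → ∀ x ∈ V n, x ∉ corners →
      lap n (fun z => g z y) x = if x = y then 1 else 0

/-- `h_n x = ∑_{y ∈ V_{SG_n}} g_n(x,y)`. -/
def hfun (n : ℕ) (g : Pt → Pt → ℝ) (x : Pt) : ℝ := ∑ᶠ y ∈ V n, g x y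

/-- Green convolution `(g_n * σ)(x) = ∑_{y ∈ V_{SG_n}} g_n(x,y) σ(y)`. -/
def conv (n : ℕ) (g : Pt → Pt → ℝ) (σ : Pt → ℕ) (x : Pt) : ℝ :=
  ∑ᶠ y ∈ V n, g x y * (σ y : ℝ)

/-- Midpoint of side `AB`. -/
def mAB : Pt := (2:ℝ)⁻¹ • (u1 + u3)
/-- Midpoint of side `BC`. -/
def mBC : Pt := (2:ℝ)⁻¹ • (u3 + u2)
/-- Midpoint of side `CA`. -/
def mCA : Pt := (2:ℝ)⁻¹ • (u2 + u1)

/-- The recursively defined sandpile configurations `M_n(a,b,c)` on `SG_n`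
(value `0` off the vertex set, and junk at level `0`). -/
def M : ℕ → ℕ → ℕ → ℕ → Pt → ℕ
  | 0, _, _, _, _ => 0
  | 1, a, b, c, x =>
      if x = u1 then a else if x = u3 then b else if x = u2 then c
      else if x = mAB then 3 else if x = mBC then 2 else if x = mCA then 3 else 0
  | n + 2, a, b, c, x =>
      if x = u1 then a else if x = u3 then b else if x = u2 then c
      else if x = mAB then 3 else if x = mBC then 2 else if x = mCA then 3
      else if (2:ℝ) • x ∈ V (n+1) then M (n+1) a 3 3 ((2:ℝ) • x)
      else if (2:ℝ) • x - u3 ∈ V (n+1) then M (n+1) 3 b 2 ((2:ℝ) • x - u3)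
      else if (2:ℝ) • x - u2 ∈ V (n+1) then M (n+1) 3 2 c ((2:ℝ) • x - u2)
      else 0

/-- Centroid of the three corners. -/
def ctr : Pt := (3:ℝ)⁻¹ • (u1 + u2 + u3)

/-- Rotation of the plane by 120° counterclockwise about the centroid. -/
def rotccw (x : Pt) : Pt :=
  (ctr.1 - (x.1 - ctr.1) / 2 - Real.sqrt 3 / 2 * (x.2 - ctr.2),
   ctr.2 + Real.sqrt 3 / 2 * (x.1 - ctr.1) - (x.2 - ctr.2) / 2)

/-- Rotation of the plane by 120° clockwise about the centroid. -/
def rotcw (x : Pt) : Pt :=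
  (ctr.1 - (x.1 - ctr.1) / 2 + Real.sqrt 3 / 2 * (x.2 - ctr.2),
   ctr.2 - Real.sqrt 3 / 2 * (x.1 - ctr.1) - (x.2 - ctr.2) / 2)

/-- The sandpile identity `id_n` on `SG_n` for `n ≥ 2` (junk `0` for `n ≤ 1` and off the
vertex set): value `2` at the corners and side midpoints, the configuration `M_{n-1}(2,2,2)`
rescaled on the bottom-left copy, its clockwise 120° rotation on the top copy, and its
counterclockwise 120° rotation on the bottom-right copy. -/
def sandId : ℕ → Pt → ℕ
  | 0, _ => 0
  | 1, _ => 0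
  | m + 2, x =>
      if x = u1 ∨ x = u2 ∨ x = u3 ∨ x = mAB ∨ x = mBC ∨ x = mCA then 2
      else if (2:ℝ) • x ∈ V (m+1) then M (m+1) 2 2 2 ((2:ℝ) • x)
      else if (2:ℝ) • x - u2 ∈ V (m+1) then M (m+1) 2 2 2 (rotccw ((2:ℝ) • x - u2))
      else if (2:ℝ) • x - u3 ∈ V (m+1) then M (m+1) 2 2 2 (rotcw ((2:ℝ) • x - u3))
      else 0

/-- `V_* = ⋃_n V_{SG_n}`. -/
def Vstar : Set Pt := ⋃ n, V n

/-- The Sierpinski gasket: the closure of `V_*` in the plane. -/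
def SGset : Set Pt := closure Vstar

/-- Euclidean distance on the plane. -/
def eud (x y : Pt) : ℝ := Real.sqrt ((x.1 - y.1) ^ 2 + (x.2 - y.2) ^ 2)

/-- The point of `V n` nearest to `x` in Euclidean distance, ties resolved by taking the
rightmost (largest first coordinate) minimizer. -/
def nearest (n : ℕ) (x : Pt) : Pt :=
  if h : ∃ y ∈ V n, (∀ z ∈ V n, eud x y ≤ eud x z) ∧
      ∀ z ∈ V n, eud x z = eud x y → z.1 ≤ y.1
  then h.choose else x

/-- Piecewise constant continuation `f^▲` of a function on `V n` to the gasket. -/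
def ext (n : ℕ) (f : Pt → ℝ) (x : Pt) : ℝ := f (nearest n x)

/-- Arc length (total variation w.r.t. the Euclidean distance) of a curve
`γ : [0,1] → ℝ²`. -/
def pathLen (γ : ℝ → Pt) : ℝ≥0∞ :=
  ⨆ p : ℕ × {u : ℕ → ℝ // Monotone u ∧ ∀ i, u i ∈ Set.Icc (0:ℝ) 1},
    ∑ i ∈ Finset.range p.1, ENNReal.ofReal (eud (γ (p.2.1 (i + 1))) (γ (p.2.1 i)))

/-- Intrinsic (shortest-path) distance between `x` and `y` through the gasket. -/
def intrinsicD (x y : Pt) : ℝ≥0∞ :=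
  ⨅ (γ : ℝ → Pt) (_ : ContinuousOn γ (Set.Icc 0 1)) (_ : γ 0 = x) (_ : γ 1 = y)
    (_ : Set.MapsTo γ (Set.Icc 0 1) SGset), pathLen γ

/-- `d(x)`: intrinsic shortest-path distance in the gasket from `x` to the nearest corner. -/
def dSG (x : Pt) : ℝ :=
  (min (intrinsicD x u1) (min (intrinsicD x u2) (intrinsicD x u3))).toReal

/-!
`SG (n+1)` is the union of the three copies `cell u '' V n` of `SG n`, where `u` runs over the
corners and `cell u` is the contraction of ratio `1/2` towards `u`; two copies meet only in a side
midpoint `cell u v`. Hence the graph distance to `u1` is explicit: at `cell u z` it is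
`distU1 n u + distU1 n z`, a function which is `1`-Lipschitz along edges and is attained by walks
through the midpoints. The rotation by 120° is a graph automorphism cycling the corners, so on the
copy of `u` the distance to the nearest corner is `distU1 n` of the image under the rotation taking
`u` to `u1`: the other two corners are at distance at least `2 ^ n`.

By induction on `n`, `Δ distU1 = 8 - 3 M(2,2,2)` off the corners: inside a copy, `distU1` is a
constant plus a copy of the level-`n` function and `M` is self-similar, while at a midpoint both
sides are computed from the neighbourhoods of the corners. Rotating back gives the theorem inside
the copies; at a midpoint `Δ d = 2 = 8 - 3 * 2`.
-/

namespace Gasket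

open Function

/-! ### Cells -/

lemma sqrt_three_pos : 0 < Real.sqrt 3 := Real.sqrt_pos.2 (by norm_num)

lemma sqrt_three_sq : Real.sqrt 3 ^ 2 = 3 := Real.sq_sqrt (by norm_num)

lemma u1_mem_corners : u1 ∈ corners := Or.inl rfl

lemma u2_mem_corners : u2 ∈ corners := Or.inr (Or.inl rfl)

lemma u3_mem_corners : u3 ∈ corners := Or.inr (Or.inr rfl)

lemma u1_ne_u2 : u1 ≠ u2 := fun h => by
  have := congrArg Prod.snd h
  simp only [u1, u2] at this
  linarith [sqrt_three_pos]

lemma u1_ne_u3 : u1 ≠ u3 := fun h => by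
  have := congrArg Prod.fst h
  simp [u1, u3] at this

lemma u2_ne_u3 : u2 ≠ u3 := fun h => by
  have := congrArg Prod.snd h
  simp [u2, u3] at this

lemma u1_eq_zero : u1 = 0 := rfl

def cell (u x : Pt) : Pt := (2:ℝ)⁻¹ • (u + x)

lemma cell_apply (u x : Pt) : cell u x = ((u.1 + x.1) / 2, (u.2 + x.2) / 2) := by
  simp only [cell, Prod.ext_iff, Prod.smul_fst, Prod.smul_snd, Prod.fst_add, Prod.snd_add,
    smul_eq_mul]
  constructor <;> ring

lemma two_smul_cell (u x : Pt) : (2:ℝ) • cell u x = u + x := smul_inv_smul₀ two_ne_zero _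

lemma two_smul_cell_sub (u x : Pt) : (2:ℝ) • cell u x - u = x := by
  rw [two_smul_cell, add_sub_cancel_left]

lemma two_smul_cell_sub_right (u z : Pt) : (2:ℝ) • cell u z - z = u := by
  rw [two_smul_cell, add_sub_cancel_right]

lemma two_smul_cell_u1 (z : Pt) : (2:ℝ) • cell u1 z = z := by
  rw [two_smul_cell, u1_eq_zero, zero_add]

lemma cell_two_smul_sub (u x : Pt) : cell u ((2:ℝ) • x - u) = x := by
  rw [cell, add_sub_cancel, inv_smul_smul₀ two_ne_zero]

lemma cell_comm (u x : Pt) : cell u x = cell x u := by rw [cell, cell, add_comm]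

lemma cell_self (u : Pt) : cell u u = u := by
  rw [cell, ← two_smul ℝ, inv_smul_smul₀ two_ne_zero]

lemma cell_injective (u : Pt) : Injective (cell u) := fun x y h => by
  rw [← two_smul_cell_sub u x, h, two_smul_cell_sub]

lemma cell_eq_cell_iff_add {u v x y : Pt} : cell u x = cell v y ↔ u + x = v + y := by
  rw [cell, cell, smul_right_inj (by norm_num)]

lemma mem_V_succ {n : ℕ} {x : Pt} : x ∈ V (n+1) ↔ ∃ u ∈ corners, ∃ z ∈ V n, x = cell u z := by
  simp only [V, corners, Set.mem_image, Set.mem_union, Set.mem_insert_iff,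
    Set.mem_singleton_iff, exists_eq_or_imp, exists_eq_left, cell, u1_eq_zero, zero_add]
  constructor
  · rintro ⟨p, (hp | ⟨z, hz, rfl⟩) | ⟨z, hz, rfl⟩, rfl⟩
    exacts [Or.inl ⟨p, hp, rfl⟩, Or.inr (Or.inl ⟨z, hz, rfl⟩), Or.inr (Or.inr ⟨z, hz, rfl⟩)]
  · rintro (⟨z, hz, rfl⟩ | ⟨z, hz, rfl⟩ | ⟨z, hz, rfl⟩)
    exacts [⟨z, Or.inl (Or.inl hz), rfl⟩, ⟨_, Or.inl (Or.inr ⟨z, hz, rfl⟩), rfl⟩,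
      ⟨_, Or.inr ⟨z, hz, rfl⟩, rfl⟩]

lemma mem_Ed_succ {n : ℕ} {x y : Pt} :
    (x, y) ∈ Ed (n+1) ↔ ∃ u ∈ corners, ∃ a b, (a, b) ∈ Ed n ∧ x = cell u a ∧ y = cell u b := by
  simp only [Ed, corners, Set.mem_image, Set.mem_union, Set.mem_insert_iff,
    Set.mem_singleton_iff, exists_eq_or_imp, exists_eq_left, cell, u1_eq_zero, zero_add,
    Prod.mk.injEq]
  constructor
  · rintro ⟨q, (hq | ⟨p, hp, rfl⟩) | ⟨p, hp, rfl⟩, rfl, rfl⟩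
    exacts [Or.inl ⟨q.1, q.2, hq, rfl, rfl⟩, Or.inr (Or.inl ⟨p.1, p.2, hp, rfl, rfl⟩),
      Or.inr (Or.inr ⟨p.1, p.2, hp, rfl, rfl⟩)]
  · rintro (⟨a, b, hp, rfl, rfl⟩ | ⟨a, b, hp, rfl, rfl⟩ | ⟨a, b, hp, rfl, rfl⟩)
    exacts [⟨(a, b), Or.inl (Or.inl hp), rfl, rfl⟩,
      ⟨_, Or.inl (Or.inr ⟨(a, b), hp, rfl⟩), rfl, rfl⟩, ⟨_, Or.inr ⟨(a, b), hp, rfl⟩, rfl, rfl⟩]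

lemma adj_succ_iff {n : ℕ} {x y : Pt} :
    (SG (n+1)).Adj x y ↔ ∃ u ∈ corners, ∃ a b, (SG n).Adj a b ∧ x = cell u a ∧ y = cell u b := by
  constructor
  · rintro ⟨hxy | hyx, hne⟩
    · obtain ⟨u, hu, a, b, hab, rfl, rfl⟩ := mem_Ed_succ.1 hxy
      exact ⟨u, hu, a, b, ⟨Or.inl hab, fun h => hne (h ▸ rfl)⟩, rfl, rfl⟩
    · obtain ⟨u, hu, a, b, hab, rfl, rfl⟩ := mem_Ed_succ.1 hyx
      exact ⟨u, hu, b, a, ⟨Or.inr hab, fun h => hne (h ▸ rfl)⟩, rfl, rfl⟩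
  · rintro ⟨u, hu, a, b, ⟨hab | hba, hne⟩, rfl, rfl⟩
    · exact ⟨Or.inl (mem_Ed_succ.2 ⟨u, hu, a, b, hab, rfl, rfl⟩), (cell_injective u).ne hne⟩
    · exact ⟨Or.inr (mem_Ed_succ.2 ⟨u, hu, b, a, hba, rfl, rfl⟩), (cell_injective u).ne hne⟩

lemma adj_cell {n : ℕ} {u a b : Pt} (hu : u ∈ corners) (h : (SG n).Adj a b) :
    (SG (n+1)).Adj (cell u a) (cell u b) :=
  adj_succ_iff.2 ⟨u, hu, a, b, h, rfl, rfl⟩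

lemma adj_zero_iff {x y : Pt} : (SG 0).Adj x y ↔ x ∈ corners ∧ y ∈ corners ∧ x ≠ y := by
  simp only [SG, Ed, corners, Set.mem_insert_iff, Set.mem_singleton_iff, Prod.mk.injEq]
  constructor
  · rintro ⟨h, hne⟩
    exact ⟨by tauto, by tauto, hne⟩
  · rintro ⟨hx, hy, hne⟩
    refine ⟨?_, hne⟩
    rcases hx with rfl | rfl | rfl <;> rcases hy with rfl | rfl | rfl <;> simp_all

lemma mem_V_of_adj {n : ℕ} {x y : Pt} (h : (SG n).Adj x y) : x ∈ V n := by
  induction n generalizing x y with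
  | zero => exact (adj_zero_iff.1 h).1
  | succ n ih =>
    obtain ⟨u, hu, a, b, hab, rfl, rfl⟩ := adj_succ_iff.1 h
    exact mem_V_succ.2 ⟨u, hu, a, ih hab, rfl⟩

lemma corners_subset_V (n : ℕ) : corners ⊆ V n := by
  induction n with
  | zero => exact subset_rfl
  | succ n ih => exact fun u hu => mem_V_succ.2 ⟨u, hu, u, ih hu, (cell_self u).symm⟩

/-! ### Separation of the cells -/

def triangle : Set Pt :=
  {x | 0 ≤ x.2 ∧ x.2 ≤ Real.sqrt 3 * x.1 ∧ x.2 ≤ Real.sqrt 3 * (1 - x.1)}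

lemma corners_subset_triangle : corners ⊆ triangle := by
  rintro u (rfl | rfl | rfl) <;> simp only [triangle, u1, u2, u3, Set.mem_ofPred_eq] <;>
    refine ⟨?_, ?_, ?_⟩ <;> nlinarith [sqrt_three_pos, sqrt_three_sq]

lemma cell_mem_triangle {u x : Pt} (hu : u ∈ corners) (hx : x ∈ triangle) :
    cell u x ∈ triangle := by
  obtain ⟨h1, h2, h3⟩ := hx
  obtain ⟨g1, g2, g3⟩ := corners_subset_triangle hu
  rw [cell_apply]
  refine ⟨by simp only; linarith, by simp only; linarith, by simp only; linarith⟩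

lemma V_subset_triangle (n : ℕ) : V n ⊆ triangle := by
  induction n with
  | zero => exact corners_subset_triangle
  | succ n ih =>
    intro x hx
    obtain ⟨u, hu, z, hz, rfl⟩ := mem_V_succ.1 hx
    exact cell_mem_triangle hu (ih hz)

lemma eq_of_cell_eq_cell {u v x y : Pt} (hu : u ∈ corners) (hv : v ∈ corners) (huv : u ≠ v)
    (hx : x ∈ triangle) (hy : y ∈ triangle) (h : cell u x = cell v y) : x = v ∧ y = u := by
  rw [cell_eq_cell_iff_add] at h
  obtain ⟨h1, h2, h3⟩ := hx
  obtain ⟨g1, g2, g3⟩ := hy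
  have e1 := congrArg Prod.fst h
  have e2 := congrArg Prod.snd h
  have := sqrt_three_pos
  rcases hu with rfl | rfl | rfl <;> rcases hv with rfl | rfl | rfl <;>
    simp only [u1, u2, u3, Prod.fst_add, Prod.snd_add, ne_eq, not_true_eq_false] at huv e1 e2 ⊢ <;>
    first
      | exact absurd trivial huv
      | exact ⟨Prod.ext (by nlinarith) (by nlinarith), Prod.ext (by nlinarith) (by nlinarith)⟩

lemma cell_eq_cell_iff {n : ℕ} {u v x y : Pt} (hu : u ∈ corners) (hv : v ∈ corners)
    (hx : x ∈ V n) (hy : y ∈ V n) : cell u x = cell v y ↔ (u = v ∧ x = y) ∨ (x = v ∧ y = u) := by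
  constructor
  · intro h
    by_cases huv : u = v
    · subst huv
      exact Or.inl ⟨rfl, cell_injective u h⟩
    · exact Or.inr
        (eq_of_cell_eq_cell hu hv huv (V_subset_triangle n hx) (V_subset_triangle n hy) h)
  · rintro (⟨rfl, rfl⟩ | ⟨rfl, rfl⟩)
    exacts [rfl, cell_comm _ _]

lemma cell_cases {n : ℕ} {x : Pt} (hx : x ∈ V (n+1)) (hxc : x ∉ corners) :
    (∃ u ∈ corners, ∃ v ∈ corners, u ≠ v ∧ x = cell u v) ∨
      ∃ u ∈ corners, ∃ z ∈ V n, z ∉ corners ∧ x = cell u z := by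
  obtain ⟨u, hu, z, hz, rfl⟩ := mem_V_succ.1 hx
  by_cases hzc : z ∈ corners
  · refine Or.inl ⟨u, hu, z, hzc, ?_, rfl⟩
    rintro rfl
    exact hxc (by rwa [cell_self])
  · exact Or.inr ⟨u, hu, z, hz, hzc, rfl⟩

lemma two_smul_cell_sub_mem_V_iff {n : ℕ} {u v z : Pt} (hu : u ∈ corners) (hv : v ∈ corners)
    (hz : z ∈ V n) : (2:ℝ) • cell u z - v ∈ V n ↔ u = v ∨ z = v := by
  constructor
  · intro h
    have := (cell_eq_cell_iff hv hu h hz).1 (cell_two_smul_sub v (cell u z))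
    tauto
  · rintro (rfl | rfl)
    · rwa [two_smul_cell_sub]
    · rw [two_smul_cell, add_sub_cancel_right]
      exact corners_subset_V n hu

lemma two_smul_cell_mem_V_iff {n : ℕ} {u z : Pt} (hu : u ∈ corners) (hz : z ∈ V n) :
    (2:ℝ) • cell u z ∈ V n ↔ u = u1 ∨ z = u1 := by
  have h := two_smul_cell_sub_mem_V_iff hu u1_mem_corners hz
  rwa [show (2:ℝ) • cell u z - u1 = (2:ℝ) • cell u z from sub_zero _] at h

def midpoints : Set Pt := {mAB, mBC, mCA}

lemma cell_mem_midpoints {u v : Pt} (hu : u ∈ corners) (hv : v ∈ corners) (huv : u ≠ v) :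
    cell u v ∈ midpoints := by
  rcases hu with rfl | rfl | rfl <;> rcases hv with rfl | rfl | rfl <;>
    first
      | exact absurd rfl huv
      | simp only [midpoints, mAB, mBC, mCA, cell, add_comm, Set.mem_insert_iff,
          Set.mem_singleton_iff, true_or, or_true]

lemma cell_not_mem_corners {n : ℕ} {u z : Pt} (hu : u ∈ corners) (hz : z ∈ V n)
    (hzc : z ∉ corners) : cell u z ∉ corners := fun h => by
  rcases (cell_eq_cell_iff hu h hz (corners_subset_V n h)).1 (cell_self _).symm with
    ⟨-, h'⟩ | ⟨h', -⟩ <;> exact hzc (h' ▸ h)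

lemma cell_not_mem_midpoints {n : ℕ} {u z : Pt} (hu : u ∈ corners) (hz : z ∈ V n)
    (hzc : z ∉ corners) : cell u z ∉ midpoints := by
  have key : ∀ {v w : Pt}, v ∈ corners → w ∈ corners → cell u z ≠ cell v w := fun hv hw h => by
    rcases (cell_eq_cell_iff hu hv hz (corners_subset_V n hw)).1 h with ⟨_, rfl⟩ | ⟨rfl, -⟩
    exacts [hzc hw, hzc hv]
  rintro (h | h | h)
  exacts [key u1_mem_corners u3_mem_corners h, key u3_mem_corners u2_mem_corners h,
    key u2_mem_corners u1_mem_corners h]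

lemma two_smul_sub_not_mem_corners {u x : Pt} (hu : u ∈ corners) (hx : x ∉ corners)
    (hxm : x ∉ midpoints) : (2:ℝ) • x - u ∉ corners := fun hw => by
  rw [← cell_two_smul_sub u x] at hx hxm
  by_cases h : u = (2:ℝ) • x - u
  · rw [← h, cell_self] at hx
    exact hx hu
  · exact hxm (cell_mem_midpoints hu hw h)

lemma two_smul_not_mem_corners {x : Pt} (hx : x ∉ corners) (hxm : x ∉ midpoints) :
    (2:ℝ) • x ∉ corners := by
  simpa only [u1_eq_zero, sub_zero] using two_smul_sub_not_mem_corners u1_mem_corners hx hxm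

/-! ### The rotation -/

lemma rotccw_apply (x : Pt) :
    rotccw x = (1 - x.1 / 2 - Real.sqrt 3 * x.2 / 2, Real.sqrt 3 * x.1 / 2 - x.2 / 2) := by
  simp only [rotccw, ctr, u1, u2, u3, Prod.ext_iff, Prod.smul_fst, Prod.smul_snd, Prod.fst_add,
    Prod.snd_add, smul_eq_mul]
  constructor
  · linear_combination (1/12 : ℝ) * sqrt_three_sq
  · ring

lemma rotccw_cell (u x : Pt) : rotccw (cell u x) = cell (rotccw u) (rotccw x) := by
  simp only [rotccw_apply, cell_apply, Prod.ext_iff]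
  constructor <;> ring

lemma rotccw_rotccw_rotccw (x : Pt) : rotccw (rotccw (rotccw x)) = x := by
  simp only [rotccw_apply, Prod.ext_iff]
  constructor
  · linear_combination (3 * x.1 / 8 - 1 / 4 + Real.sqrt 3 * x.2 / 8) * sqrt_three_sq
  · linear_combination (3 * x.2 / 8 - Real.sqrt 3 * x.1 / 8) * sqrt_three_sq

lemma rotcw_eq (x : Pt) : rotcw x = rotccw (rotccw x) := by
  simp only [rotcw, ctr, rotccw_apply, u1, u2, u3, Prod.ext_iff, Prod.smul_fst, Prod.smul_snd,
    Prod.fst_add, Prod.snd_add, smul_eq_mul]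
  constructor
  · linear_combination (x.1 / 4 - 1/12) * sqrt_three_sq
  · linear_combination (x.2 / 4) * sqrt_three_sq

lemma rotccw_injective : Injective rotccw := fun x y h => by
  rw [← rotccw_rotccw_rotccw x, h, rotccw_rotccw_rotccw]

lemma rotccw_u1 : rotccw u1 = u3 := by simp [rotccw_apply, u1, u3]

lemma rotccw_u3 : rotccw u3 = u2 := by
  simp only [rotccw_apply, u3, u2]; norm_num

lemma rotccw_u2 : rotccw u2 = u1 := by
  simp only [rotccw_apply, u2, u1, Prod.ext_iff]
  constructor
  · linear_combination (-1/4 : ℝ) * sqrt_three_sq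
  · ring

lemma rotccw_mem_corners {u : Pt} (hu : u ∈ corners) : rotccw u ∈ corners := by
  rcases hu with rfl | rfl | rfl <;> simp [rotccw_u1, rotccw_u2, rotccw_u3, corners]

lemma rotccw_mem_corners_iff {z : Pt} : rotccw z ∈ corners ↔ z ∈ corners :=
  ⟨fun h => rotccw_rotccw_rotccw z ▸ rotccw_mem_corners (rotccw_mem_corners h),
    rotccw_mem_corners⟩

lemma rotccw_mem_V {n : ℕ} {x : Pt} (hx : x ∈ V n) : rotccw x ∈ V n := by
  induction n generalizing x with
  | zero => exact rotccw_mem_corners hx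
  | succ n ih =>
    obtain ⟨u, hu, z, hz, rfl⟩ := mem_V_succ.1 hx
    exact mem_V_succ.2 ⟨_, rotccw_mem_corners hu, _, ih hz, rotccw_cell u z⟩

lemma adj_rotccw {n : ℕ} {x y : Pt} (h : (SG n).Adj x y) : (SG n).Adj (rotccw x) (rotccw y) := by
  induction n generalizing x y with
  | zero =>
    obtain ⟨hx, hy, hne⟩ := adj_zero_iff.1 h
    exact adj_zero_iff.2 ⟨rotccw_mem_corners hx, rotccw_mem_corners hy, rotccw_injective.ne hne⟩
  | succ n ih =>
    obtain ⟨u, hu, a, b, hab, rfl, rfl⟩ := adj_succ_iff.1 h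
    rw [rotccw_cell, rotccw_cell]
    exact adj_cell (rotccw_mem_corners hu) (ih hab)

lemma iterate_rotccw_cell (k : ℕ) (u x : Pt) :
    rotccw^[k] (cell u x) = cell (rotccw^[k] u) (rotccw^[k] x) := by
  induction k with
  | zero => rfl
  | succ k ih => rw [iterate_succ_apply', iterate_succ_apply', iterate_succ_apply', ih, rotccw_cell]

lemma iterate_rotccw_mem_V {n : ℕ} (k : ℕ) {x : Pt} (hx : x ∈ V n) : rotccw^[k] x ∈ V n :=
  Set.MapsTo.iterate (fun _ => rotccw_mem_V) k hx

lemma iterate_rotccw_mem_corners (k : ℕ) {u : Pt} (hu : u ∈ corners) :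
    rotccw^[k] u ∈ corners :=
  Set.MapsTo.iterate (fun _ => rotccw_mem_corners) k hu

lemma iterate_rotccw_mem_corners_iff (k : ℕ) {z : Pt} : rotccw^[k] z ∈ corners ↔ z ∈ corners := by
  induction k with
  | zero => rfl
  | succ k ih => rw [iterate_succ_apply', rotccw_mem_corners_iff, ih]

lemma exists_iterate_rotccw_eq_u1 {u : Pt} (hu : u ∈ corners) : ∃ k, rotccw^[k] u = u1 := by
  rcases hu with rfl | rfl | rfl
  · exact ⟨0, rfl⟩
  · exact ⟨1, rotccw_u2⟩
  · exact ⟨2, by rw [iterate_succ_apply', iterate_one, rotccw_u3, rotccw_u2]⟩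

/-! ### Neighbourhoods and the Laplacian -/

lemma finite_V (n : ℕ) : (V n).Finite := by
  induction n with
  | zero => exact (Set.toFinite {u3}).insert _ |>.insert _
  | succ n ih => exact ((ih.union (ih.image _)).union (ih.image _)).image _

lemma neighborSet_subset_V {n : ℕ} (x : Pt) : (SG n).neighborSet x ⊆ V n :=
  fun _ h => mem_V_of_adj (SimpleGraph.adj_symm _ h)

lemma finite_neighborSet {n : ℕ} (x : Pt) : ((SG n).neighborSet x).Finite :=
  (finite_V n).subset (neighborSet_subset_V x)

lemma neighborSet_zero_u1 : (SG 0).neighborSet u1 = {u2, u3} := by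
  ext y
  simp only [SimpleGraph.mem_neighborSet, adj_zero_iff, corners, Set.mem_insert_iff,
    Set.mem_singleton_iff]
  have := u1_ne_u2; have := u1_ne_u3
  aesop

lemma neighborSet_zero_u2 : (SG 0).neighborSet u2 = {u1, u3} := by
  ext y
  simp only [SimpleGraph.mem_neighborSet, adj_zero_iff, corners, Set.mem_insert_iff,
    Set.mem_singleton_iff]
  have := u1_ne_u2; have := u2_ne_u3
  aesop

lemma neighborSet_zero_u3 : (SG 0).neighborSet u3 = {u1, u2} := by
  ext y
  simp only [SimpleGraph.mem_neighborSet, adj_zero_iff, corners, Set.mem_insert_iff,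
    Set.mem_singleton_iff]
  have := u1_ne_u3; have := u2_ne_u3
  aesop

lemma neighborSet_cell {n : ℕ} {u z : Pt} (hu : u ∈ corners) (hz : z ∈ V n)
    (hzc : z ∈ corners → z = u) :
    (SG (n+1)).neighborSet (cell u z) = cell u '' (SG n).neighborSet z := by
  ext y
  constructor
  · intro hy
    obtain ⟨v, hv, a, b, hab, hza, rfl⟩ := adj_succ_iff.1 hy
    rcases (cell_eq_cell_iff hu hv hz (mem_V_of_adj hab)).1 hza with ⟨rfl, rfl⟩ | ⟨rfl, rfl⟩
    · exact ⟨b, hab, rfl⟩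
    · obtain rfl := hzc hv
      exact ⟨b, hab, rfl⟩
  · rintro ⟨b, hb, rfl⟩
    exact adj_cell hu hb

lemma neighborSet_cell_corner {n : ℕ} {u v : Pt} (hu : u ∈ corners) (hv : v ∈ corners)
    (huv : u ≠ v) :
    (SG (n+1)).neighborSet (cell u v) =
      cell u '' (SG n).neighborSet v ∪ cell v '' (SG n).neighborSet u := by
  ext y
  constructor
  · intro hy
    obtain ⟨w, hw, a, b, hab, hza, rfl⟩ := adj_succ_iff.1 hy
    rcases (cell_eq_cell_iff hu hw (corners_subset_V n hv) (mem_V_of_adj hab)).1 hza with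
      ⟨rfl, rfl⟩ | ⟨rfl, rfl⟩
    · exact Or.inl ⟨b, hab, rfl⟩
    · exact Or.inr ⟨b, hab, rfl⟩
  · rintro (⟨b, hb, rfl⟩ | ⟨b, hb, rfl⟩)
    · exact adj_cell hu hb
    · rw [cell_comm]
      exact adj_cell hv hb

lemma neighborSet_rotccw {n : ℕ} (x : Pt) :
    (SG n).neighborSet (rotccw x) = rotccw '' (SG n).neighborSet x := by
  ext y
  constructor
  · intro hy
    refine ⟨rotccw (rotccw y), ?_, rotccw_rotccw_rotccw y⟩
    have := adj_rotccw (adj_rotccw hy)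
    rwa [rotccw_rotccw_rotccw] at this
  · rintro ⟨b, hb, rfl⟩
    exact adj_rotccw hb

lemma neighborSet_iterate_rotccw {n : ℕ} (k : ℕ) (x : Pt) :
    (SG n).neighborSet (rotccw^[k] x) = rotccw^[k] '' (SG n).neighborSet x := by
  induction k with
  | zero => simp
  | succ k ih => rw [iterate_succ_apply', neighborSet_rotccw, ih, Set.image_image,
      iterate_succ']; rfl

lemma ncard_neighborSet_corner {n : ℕ} {u : Pt} (hu : u ∈ corners) :
    ((SG n).neighborSet u).ncard = 2 := by
  induction n with
  | zero =>
    rcases hu with rfl | rfl | rfl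
    · rw [neighborSet_zero_u1, Set.ncard_pair u2_ne_u3]
    · rw [neighborSet_zero_u2, Set.ncard_pair u1_ne_u3]
    · rw [neighborSet_zero_u3, Set.ncard_pair u1_ne_u2]
  | succ n ih =>
    conv_lhs => rw [← cell_self u]
    rw [neighborSet_cell hu (corners_subset_V n hu) (fun _ => rfl),
      Set.ncard_image_of_injective _ (cell_injective u), ih]

lemma disjoint_image_cell_neighborSet {n : ℕ} {u v : Pt} (hu : u ∈ corners) (hv : v ∈ corners)
    (huv : u ≠ v) :
    Disjoint (cell u '' (SG n).neighborSet v) (cell v '' (SG n).neighborSet u) := by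
  rw [Set.disjoint_left]
  rintro _ ⟨a, ha, rfl⟩ ⟨b, hb, hab⟩
  rcases (cell_eq_cell_iff hv hu (neighborSet_subset_V u hb) (neighborSet_subset_V v ha)).1 hab
    with ⟨rfl, -⟩ | ⟨rfl, -⟩
  · exact huv rfl
  · exact (SG n).irrefl hb

lemma ncard_neighborSet {n : ℕ} {x : Pt} (hx : x ∈ V n) (hxc : x ∉ corners) :
    ((SG n).neighborSet x).ncard = 4 := by
  induction n generalizing x with
  | zero => exact absurd hx hxc
  | succ n ih =>
    rcases cell_cases hx hxc with ⟨u, hu, v, hv, huv, rfl⟩ | ⟨u, hu, z, hz, hzc, rfl⟩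
    · rw [neighborSet_cell_corner hu hv huv,
        Set.ncard_union_eq (disjoint_image_cell_neighborSet hu hv huv)
          ((finite_neighborSet _).image _) ((finite_neighborSet _).image _),
        Set.ncard_image_of_injective _ (cell_injective u),
        Set.ncard_image_of_injective _ (cell_injective v), ncard_neighborSet_corner hu,
        ncard_neighborSet_corner hv]
    · rw [neighborSet_cell hu hz (fun h => absurd h hzc),
        Set.ncard_image_of_injective _ (cell_injective u), ih hz hzc]

lemma lap_eq_finsum (n : ℕ) (f : Pt → ℝ) (x : Pt) :
    lap n f x = 4 * f x - ∑ᶠ y ∈ (SG n).neighborSet x, f y := rfl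

lemma lap_congr {n : ℕ} {f g : Pt → ℝ} {x : Pt} (hx : x ∈ V n) (h : ∀ y ∈ V n, f y = g y) :
    lap n f x = lap n g x := by
  rw [lap_eq_finsum, lap_eq_finsum, h x hx,
    finsum_mem_congr rfl fun y hy => h y (neighborSet_subset_V x hy)]

lemma lap_comp {m n : ℕ} {g : Pt → Pt} (hg : Injective g) {f : Pt → ℝ} {z : Pt}
    (h : (SG m).neighborSet (g z) = g '' (SG n).neighborSet z) :
    lap m f (g z) = lap n (fun y => f (g y)) z := by
  rw [lap_eq_finsum, lap_eq_finsum, h, finsum_mem_image hg.injOn]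

lemma finsum_mem_const {s : Set Pt} (hs : s.Finite) (c : ℝ) : ∑ᶠ _ ∈ s, c = s.ncard * c := by
  rw [finsum_mem_eq_finite_toFinset_sum _ hs, Finset.sum_const, Set.ncard_eq_toFinset_card s hs,
    nsmul_eq_mul]

lemma finsum_mem_const_add {s : Set Pt} (hs : s.Finite) (c : ℝ) (f : Pt → ℝ) :
    ∑ᶠ y ∈ s, (c + f y) = s.ncard * c + ∑ᶠ y ∈ s, f y := by
  rw [finsum_mem_add_distrib hs, finsum_mem_const hs]

lemma lap_const_add {n : ℕ} {x : Pt} (hx : x ∈ V n) (hxc : x ∉ corners) (c : ℝ) (f : Pt → ℝ) :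
    lap n (fun y => c + f y) x = lap n f x := by
  rw [lap_eq_finsum, lap_eq_finsum, finsum_mem_const_add (finite_neighborSet x),
    ncard_neighborSet hx hxc]
  push_cast
  ring

lemma lap_cell_corner {n : ℕ} {u v : Pt} (hu : u ∈ corners) (hv : v ∈ corners) (huv : u ≠ v)
    (f : Pt → ℝ) :
    lap (n+1) f (cell u v) = 4 * f (cell u v) -
      (∑ᶠ y ∈ (SG n).neighborSet v, f (cell u y) + ∑ᶠ y ∈ (SG n).neighborSet u, f (cell v y)) := by
  rw [lap_eq_finsum, neighborSet_cell_corner hu hv huv,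
    finsum_mem_union (disjoint_image_cell_neighborSet hu hv huv) ((finite_neighborSet _).image _)
      ((finite_neighborSet _).image _),
    finsum_mem_image (cell_injective u).injOn, finsum_mem_image (cell_injective v).injOn]

/-! ### Distance to the corners -/

-- The graph distance to `u1` (`dist_u1`), computed copy by copy (`distU1_cell`).
def distU1 : ℕ → Pt → ℕ
  | 0, x => if x = u1 then 0 else 1
  | n + 1, x =>
      if (2:ℝ) • x ∈ V n then distU1 n ((2:ℝ) • x)
      else if (2:ℝ) • x - u2 ∈ V n then 2 ^ n + distU1 n ((2:ℝ) • x - u2)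
      else 2 ^ n + distU1 n ((2:ℝ) • x - u3)

lemma distU1_u1 (n : ℕ) : distU1 n u1 = 0 := by
  induction n with
  | zero => simp [distU1]
  | succ n ih =>
    conv_lhs => rw [← cell_self u1]
    rw [distU1, two_smul_cell_u1, if_pos (corners_subset_V n u1_mem_corners), ih]

lemma distU1_u2 (n : ℕ) : distU1 n u2 = 2 ^ n := by
  induction n with
  | zero => simp [distU1, u1_ne_u2.symm]
  | succ n ih =>
    have hu := u2_mem_corners
    have hV := corners_subset_V n hu
    conv_lhs => rw [← cell_self u2]
    rw [distU1, if_neg (by simp [two_smul_cell_mem_V_iff hu hV, u1_ne_u2.symm]),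
      if_pos ((two_smul_cell_sub_mem_V_iff hu hu hV).2 (Or.inl rfl)), two_smul_cell_sub, ih,
      pow_succ, mul_two]

lemma distU1_u3 (n : ℕ) : distU1 n u3 = 2 ^ n := by
  induction n with
  | zero => simp [distU1, u1_ne_u3.symm]
  | succ n ih =>
    have hu := u3_mem_corners
    have hV := corners_subset_V n hu
    conv_lhs => rw [← cell_self u3]
    rw [distU1, if_neg (by simp [two_smul_cell_mem_V_iff hu hV, u1_ne_u3.symm]),
      if_neg (by simp [two_smul_cell_sub_mem_V_iff hu u2_mem_corners hV, u2_ne_u3.symm]),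
      two_smul_cell_sub, ih, pow_succ, mul_two]

lemma distU1_corner_of_ne {n : ℕ} {u : Pt} (hu : u ∈ corners) (hu1 : u ≠ u1) :
    distU1 n u = 2 ^ n := by
  rcases hu with rfl | rfl | rfl
  exacts [absurd rfl hu1, distU1_u2 n, distU1_u3 n]

lemma distU1_cell {n : ℕ} {u z : Pt} (hu : u ∈ corners) (hz : z ∈ V n) :
    distU1 (n+1) (cell u z) = distU1 n u + distU1 n z := by
  have hu2 := u2_mem_corners
  rw [distU1]
  split_ifs with h1 h2
  · rcases (two_smul_cell_mem_V_iff hu hz).1 h1 with rfl | rfl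
    · rw [two_smul_cell_u1, distU1_u1, zero_add]
    · rw [two_smul_cell, u1_eq_zero, add_zero, ← u1_eq_zero, distU1_u1, add_zero]
  · rcases (two_smul_cell_sub_mem_V_iff hu hu2 hz).1 h2 with rfl | rfl
    · rw [two_smul_cell_sub, distU1_u2]
    · rw [two_smul_cell_sub_right, distU1_u2, add_comm]
  · have : u = u3 := by
      rw [two_smul_cell_mem_V_iff hu hz] at h1
      rw [two_smul_cell_sub_mem_V_iff hu hu2 hz] at h2
      rcases hu with rfl | rfl | rfl <;> tauto
    subst this
    rw [two_smul_cell_sub, distU1_u3]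

lemma distU1_le {n : ℕ} {z : Pt} (hz : z ∈ V n) : distU1 n z ≤ 2 ^ n := by
  induction n generalizing z with
  | zero => simp only [distU1]; split_ifs <;> simp
  | succ n ih =>
    obtain ⟨u, hu, w, hw, rfl⟩ := mem_V_succ.1 hz
    rw [distU1_cell hu hw, pow_succ, mul_two]
    exact add_le_add (ih (corners_subset_V n hu)) (ih hw)

lemma distU1_le_of_adj {n : ℕ} {x y : Pt} (h : (SG n).Adj x y) :
    distU1 n x ≤ distU1 n y + 1 := by
  induction n generalizing x y with
  | zero => simp only [distU1]; split_ifs <;> simp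
  | succ n ih =>
    obtain ⟨u, hu, a, b, hab, rfl, rfl⟩ := adj_succ_iff.1 h
    rw [distU1_cell hu (mem_V_of_adj hab), distU1_cell hu (mem_V_of_adj hab.symm)]
    have := ih hab
    omega

lemma distU1_le_length {n : ℕ} {x y : Pt} (p : (SG n).Walk x y) :
    distU1 n x ≤ distU1 n y + p.length := by
  induction p with
  | nil => simp
  | cons h _ ih =>
    have := distU1_le_of_adj h
    rw [SimpleGraph.Walk.length_cons]
    omega

lemma exists_walk_cell {n : ℕ} {u a b : Pt} (hu : u ∈ corners) (p : (SG n).Walk a b) :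
    ∃ q : (SG (n+1)).Walk (cell u a) (cell u b), q.length = p.length := by
  induction p with
  | nil => exact ⟨.nil, rfl⟩
  | cons h _ ih =>
    obtain ⟨q, hq⟩ := ih
    exact ⟨.cons (adj_cell hu h) q, by rw [SimpleGraph.Walk.length_cons, hq,
      SimpleGraph.Walk.length_cons]⟩

lemma exists_walk_to_u1 {n : ℕ} {z : Pt} (hz : z ∈ V n) :
    ∃ p : (SG n).Walk z u1, p.length ≤ distU1 n z := by
  induction n generalizing z with
  | zero =>
    by_cases h : z = u1
    · subst h
      exact ⟨.nil, by simp⟩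
    · refine ⟨.cons (adj_zero_iff.2 ⟨hz, u1_mem_corners, h⟩) .nil, ?_⟩
      simp [distU1, h]
  | succ n ih =>
    obtain ⟨u, hu, w, hw, rfl⟩ := mem_V_succ.1 hz
    obtain ⟨p, hp⟩ := ih hw
    obtain ⟨q, hq⟩ := ih (corners_subset_V n hu)
    obtain ⟨p', hp'⟩ := exists_walk_cell hu p
    obtain ⟨q', hq'⟩ := exists_walk_cell u1_mem_corners q
    -- through the vertex `cell u u1 = cell u1 u` shared by the copies of `u` and `u1`
    refine ⟨(p'.copy rfl (cell_comm u u1)).append (q'.copy rfl (cell_self u1)), ?_⟩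
    rw [SimpleGraph.Walk.length_append, SimpleGraph.Walk.length_copy,
      SimpleGraph.Walk.length_copy, hp', hq', distU1_cell hu hw]
    omega

lemma reachable_u1 {n : ℕ} {z : Pt} (hz : z ∈ V n) : (SG n).Reachable z u1 :=
  (exists_walk_to_u1 hz).elim fun p _ => ⟨p⟩

lemma dist_u1 {n : ℕ} {z : Pt} (hz : z ∈ V n) : (SG n).dist z u1 = distU1 n z := by
  obtain ⟨p, hp⟩ := exists_walk_to_u1 hz
  obtain ⟨q, hq⟩ := (reachable_u1 hz).exists_walk_length_eq_dist
  have := distU1_le_length q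
  rw [distU1_u1, hq] at this
  exact le_antisymm ((SimpleGraph.dist_le p).trans hp) (by omega)

lemma dist_map_le {V W : Type*} {G : SimpleGraph V} {H : SimpleGraph W} (f : G →g H) {x y : V}
    (h : G.Reachable x y) : H.dist (f x) (f y) ≤ G.dist x y := by
  obtain ⟨p, hp⟩ := h.exists_walk_length_eq_dist
  exact hp ▸ (SimpleGraph.dist_le (p.map f)).trans_eq (SimpleGraph.Walk.length_map f p)

def rotccwHom (n : ℕ) : SG n →g SG n := ⟨rotccw, adj_rotccw⟩

lemma dist_rotccw {n : ℕ} {x y : Pt} (hx : x ∈ V n) (hy : y ∈ V n) :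
    (SG n).dist (rotccw x) (rotccw y) = (SG n).dist x y := by
  have reach : ∀ {a b : Pt}, a ∈ V n → b ∈ V n → (SG n).Reachable a b :=
    fun ha hb => (reachable_u1 ha).trans (reachable_u1 hb).symm
  refine le_antisymm (dist_map_le (rotccwHom n) (reach hx hy)) ?_
  calc (SG n).dist x y
      = (SG n).dist (rotccw (rotccw (rotccw x))) (rotccw (rotccw (rotccw y))) := by
        rw [rotccw_rotccw_rotccw, rotccw_rotccw_rotccw]
    _ ≤ (SG n).dist (rotccw (rotccw x)) (rotccw (rotccw y)) :=
        dist_map_le (rotccwHom n) (reach (rotccw_mem_V (rotccw_mem_V hx))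
          (rotccw_mem_V (rotccw_mem_V hy)))
    _ ≤ (SG n).dist (rotccw x) (rotccw y) :=
        dist_map_le (rotccwHom n) (reach (rotccw_mem_V hx) (rotccw_mem_V hy))

lemma dist_iterate_rotccw {n : ℕ} (k : ℕ) {x y : Pt} (hx : x ∈ V n) (hy : y ∈ V n) :
    (SG n).dist (rotccw^[k] x) (rotccw^[k] y) = (SG n).dist x y := by
  induction k with
  | zero => rfl
  | succ k ih => rw [iterate_succ_apply', iterate_succ_apply',
      dist_rotccw (iterate_rotccw_mem_V k hx) (iterate_rotccw_mem_V k hy), ih]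

lemma dcorner_rotccw {n : ℕ} {x : Pt} (hx : x ∈ V n) : dcorner n (rotccw x) = dcorner n x := by
  have h : ∀ {u : Pt}, u ∈ corners → (SG n).dist (rotccw x) (rotccw u) = (SG n).dist x u :=
    fun hu => dist_rotccw hx (corners_subset_V n hu)
  have h1 := h u1_mem_corners
  have h2 := h u2_mem_corners
  have h3 := h u3_mem_corners
  rw [rotccw_u1] at h1
  rw [rotccw_u2] at h2
  rw [rotccw_u3] at h3
  simp only [dcorner, gdist, h1, h2, h3]
  omega

lemma dcorner_iterate_rotccw {n : ℕ} (k : ℕ) {x : Pt} (hx : x ∈ V n) :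
    dcorner n (rotccw^[k] x) = dcorner n x := by
  induction k with
  | zero => rfl
  | succ k ih => rw [iterate_succ_apply', dcorner_rotccw (iterate_rotccw_mem_V k hx), ih]

lemma dist_cell_u1 {n : ℕ} {u y : Pt} (hu : u ∈ corners) (hy : y ∈ V n) :
    (SG (n+1)).dist (cell u y) u1 = distU1 n u + distU1 n y := by
  rw [dist_u1 (mem_V_succ.2 ⟨u, hu, y, hy, rfl⟩), distU1_cell hu hy]

lemma le_dist_cell_corner {n : ℕ} {u v y : Pt} (hu : u ∈ corners) (hv : v ∈ corners)
    (huv : u ≠ v) (hy : y ∈ V n) : 2 ^ n ≤ (SG (n+1)).dist (cell u y) v := by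
  obtain ⟨k, hk⟩ := exists_iterate_rotccw_eq_u1 hv
  have hku : rotccw^[k] u ≠ u1 := hk ▸ (rotccw_injective.iterate k).ne huv
  rw [← dist_iterate_rotccw k (mem_V_succ.2 ⟨u, hu, y, hy, rfl⟩) (corners_subset_V _ hv),
    iterate_rotccw_cell, hk, dist_cell_u1 (iterate_rotccw_mem_corners k hu)
      (iterate_rotccw_mem_V k hy), distU1_corner_of_ne (iterate_rotccw_mem_corners k hu) hku]
  exact Nat.le_add_right _ _

lemma dcorner_cell_u1 {n : ℕ} {y : Pt} (hy : y ∈ V n) : dcorner (n+1) (cell u1 y) = distU1 n y := by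
  have h2 := le_dist_cell_corner u1_mem_corners u2_mem_corners u1_ne_u2 hy
  have h3 := le_dist_cell_corner u1_mem_corners u3_mem_corners u1_ne_u3 hy
  have := distU1_le hy
  simp only [dcorner, gdist, dist_cell_u1 u1_mem_corners hy, distU1_u1] at h2 h3 ⊢
  omega

lemma dcorner_cell {n k : ℕ} {u y : Pt} (hu : u ∈ corners) (hk : rotccw^[k] u = u1)
    (hy : y ∈ V n) : dcorner (n+1) (cell u y) = distU1 n (rotccw^[k] y) := by
  rw [← dcorner_iterate_rotccw k (mem_V_succ.2 ⟨u, hu, y, hy, rfl⟩), iterate_rotccw_cell, hk,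
    dcorner_cell_u1 (iterate_rotccw_mem_V k hy)]

lemma dcorner_cell_corner {n : ℕ} {u v : Pt} (hu : u ∈ corners) (hv : v ∈ corners)
    (huv : u ≠ v) : dcorner (n+1) (cell u v) = 2 ^ n := by
  obtain ⟨k, hk⟩ := exists_iterate_rotccw_eq_u1 hu
  rw [dcorner_cell hu hk (corners_subset_V n hv), distU1_corner_of_ne
    (iterate_rotccw_mem_corners k hv) (hk ▸ (rotccw_injective.iterate k).ne huv.symm)]

/-! ### The configurations `M` -/

lemma M_param : ∀ (n : ℕ) {a b c a' b' c' : ℕ} {x : Pt}, x ∉ corners →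
    M n a b c x = M n a' b' c' x
  | 0, _, _, _, _, _, _, _, _ => rfl
  | 1, _, _, _, _, _, _, x, hx => by
    have h : x ≠ u1 ∧ x ≠ u2 ∧ x ≠ u3 := by simpa [corners] using hx
    simp only [M, if_neg h.1, if_neg h.2.1, if_neg h.2.2]
  | m + 2, a, b, c, a', b', c', x, hx => by
    have h : x ≠ u1 ∧ x ≠ u2 ∧ x ≠ u3 := by simpa [corners] using hx
    simp only [M, if_neg h.1, if_neg h.2.1, if_neg h.2.2]
    split_ifs with hA hB hC <;> try rfl
    all_goals
      have hxm : x ∉ midpoints := by simp [midpoints, hA, hB, hC]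
    · exact M_param (m + 1) (two_smul_not_mem_corners hx hxm)
    · exact M_param (m + 1) (two_smul_sub_not_mem_corners u3_mem_corners hx hxm)
    · exact M_param (m + 1) (two_smul_sub_not_mem_corners u2_mem_corners hx hxm)

lemma M_cell {m a b c : ℕ} {u z : Pt} (hu : u ∈ corners) (hz : z ∈ V (m+1))
    (hzc : z ∉ corners) : M (m+2) a b c (cell u z) = M (m+1) 2 2 2 z := by
  have hc : cell u z ≠ u1 ∧ cell u z ≠ u2 ∧ cell u z ≠ u3 := by
    simpa [corners] using cell_not_mem_corners hu hz hzc
  have hm : cell u z ≠ mAB ∧ cell u z ≠ mBC ∧ cell u z ≠ mCA := by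
    simpa [midpoints] using cell_not_mem_midpoints hu hz hzc
  have hz' : z ≠ u1 ∧ z ≠ u2 ∧ z ≠ u3 := by simpa [corners] using hzc
  simp only [M, if_neg hc.1, if_neg hc.2.1, if_neg hc.2.2, if_neg hm.1, if_neg hm.2.1,
    if_neg hm.2.2, two_smul_cell_mem_V_iff hu hz, two_smul_cell_sub_mem_V_iff hu u2_mem_corners hz,
    two_smul_cell_sub_mem_V_iff hu u3_mem_corners hz, hz'.1, hz'.2.1, hz'.2.2, or_false]
  rcases hu with rfl | rfl | rfl
  · simp only [if_true, two_smul_cell_u1]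
    exact M_param _ hzc
  · simp only [u1_ne_u2.symm, u2_ne_u3, if_false, if_true, two_smul_cell_sub]
    exact M_param _ hzc
  · simp only [u1_ne_u3.symm, u2_ne_u3.symm, if_false, if_true, two_smul_cell_sub]
    exact M_param _ hzc

lemma M_mAB (n a b c : ℕ) : M (n+1) a b c mAB = 3 := by
  have h : mAB ≠ u1 ∧ mAB ≠ u2 ∧ mAB ≠ u3 := by
    norm_num [mAB, u1, u2, u3, Prod.ext_iff, eq_comm (a := (0:ℝ))]
  cases n <;> simp only [M, h.1, h.2.1, h.2.2, if_false, if_true]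

lemma M_mBC (n a b c : ℕ) : M (n+1) a b c mBC = 2 := by
  have h : mBC ≠ u1 ∧ mBC ≠ u2 ∧ mBC ≠ u3 ∧ mBC ≠ mAB := by
    norm_num [mAB, mBC, u1, u2, u3, Prod.ext_iff, eq_comm (a := (0:ℝ))]
  cases n <;> simp only [M, h.1, h.2.1, h.2.2.1, h.2.2.2, if_false, if_true]

lemma M_mCA (n a b c : ℕ) : M (n+1) a b c mCA = 3 := by
  have h : mCA ≠ u1 ∧ mCA ≠ u2 ∧ mCA ≠ u3 ∧ mCA ≠ mAB ∧ mCA ≠ mBC := by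
    norm_num [mAB, mBC, mCA, u1, u2, u3, Prod.ext_iff, eq_comm (a := (0:ℝ))]
  cases n <;> simp only [M, h.1, h.2.1, h.2.2.1, h.2.2.2.1, h.2.2.2.2, if_false, if_true]

lemma M_cell_corner {n : ℕ} {u v : Pt} (hu : u ∈ corners) (hv : v ∈ corners) (huv : u ≠ v) :
    M (n+1) 2 2 2 (cell u v) = if u = u1 ∨ v = u1 then 3 else 2 := by
  rcases hu with rfl | rfl | rfl <;> rcases hv with rfl | rfl | rfl <;>
    first
      | exact absurd rfl huv
      | simp only [u1_ne_u2.symm, u1_ne_u3.symm, or_true, true_or, or_self, if_true, if_false]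
  · rw [cell_comm]; exact M_mCA n 2 2 2
  · exact M_mAB n 2 2 2
  · exact M_mCA n 2 2 2
  · rw [cell_comm]; exact M_mBC n 2 2 2
  · rw [cell_comm]; exact M_mAB n 2 2 2
  · exact M_mBC n 2 2 2

lemma sandId_cell_corner {m : ℕ} {u v : Pt} (hu : u ∈ corners) (hv : v ∈ corners)
    (huv : u ≠ v) : sandId (m+2) (cell u v) = 2 := by
  have h := cell_mem_midpoints hu hv huv
  simp only [midpoints, Set.mem_insert_iff, Set.mem_singleton_iff] at h
  simp only [sandId, h, or_true, if_true]

lemma exists_sandId_cell {m : ℕ} {u z : Pt} (hu : u ∈ corners) (hz : z ∈ V (m+1))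
    (hzc : z ∉ corners) :
    ∃ k, rotccw^[k] u = u1 ∧ sandId (m+2) (cell u z) = M (m+1) 2 2 2 (rotccw^[k] z) := by
  have hc : ¬(cell u z = u1 ∨ cell u z = u2 ∨ cell u z = u3 ∨ cell u z = mAB ∨
      cell u z = mBC ∨ cell u z = mCA) := by
    have h1 := cell_not_mem_corners hu hz hzc
    have h2 := cell_not_mem_midpoints hu hz hzc
    simp only [corners, midpoints, Set.mem_insert_iff, Set.mem_singleton_iff] at h1 h2
    tauto
  have hz' : z ≠ u1 ∧ z ≠ u2 ∧ z ≠ u3 := by simpa [corners] using hzc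
  simp only [sandId, if_neg hc, two_smul_cell_mem_V_iff hu hz, two_smul_cell_sub_mem_V_iff hu
      u2_mem_corners hz, hz'.1, hz'.2.1, or_false]
  rcases hu with rfl | rfl | rfl
  · exact ⟨0, rfl, by simp only [if_true, two_smul_cell_u1]; rfl⟩
  · refine ⟨1, rotccw_u2, ?_⟩
    simp only [u1_ne_u2.symm, if_false, two_smul_cell_sub, if_true]
    rfl
  · refine ⟨2, by rw [iterate_succ_apply', iterate_one, rotccw_u3, rotccw_u2], ?_⟩
    simp only [u1_ne_u3.symm, u2_ne_u3.symm, if_false, two_smul_cell_sub, hz, if_true, rotcw_eq]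
    rfl

/-! ### Laplacians -/

lemma sum_neighborSet_distU1_cell {n : ℕ} {u v : Pt} (hu : u ∈ corners) (hv : v ∈ corners) :
    ∑ᶠ y ∈ (SG n).neighborSet v, (distU1 (n+1) (cell u y) : ℝ) =
      2 * distU1 n u + ∑ᶠ y ∈ (SG n).neighborSet v, (distU1 n y : ℝ) := by
  rw [finsum_mem_congr rfl fun y hy => by rw [distU1_cell hu (neighborSet_subset_V v hy),
    Nat.cast_add], finsum_mem_const_add (finite_neighborSet v), ncard_neighborSet_corner hv]
  norm_num

lemma sum_neighborSet_distU1_succ {n : ℕ} {u : Pt} (hu : u ∈ corners) :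
    ∑ᶠ y ∈ (SG (n+1)).neighborSet u, (distU1 (n+1) y : ℝ) =
      2 * distU1 n u + ∑ᶠ y ∈ (SG n).neighborSet u, (distU1 n y : ℝ) := by
  conv_lhs => rw [← cell_self u]
  rw [neighborSet_cell hu (corners_subset_V n hu) (fun _ => rfl),
    finsum_mem_image (cell_injective u).injOn, sum_neighborSet_distU1_cell hu hu]

lemma sum_neighborSet_u1_distU1 (n : ℕ) :
    ∑ᶠ y ∈ (SG n).neighborSet u1, (distU1 n y : ℝ) = 2 := by
  induction n with
  | zero =>
    rw [neighborSet_zero_u1, finsum_mem_pair u2_ne_u3, distU1_u2, distU1_u3]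
    norm_num
  | succ n ih => rw [sum_neighborSet_distU1_succ u1_mem_corners, distU1_u1, ih]; norm_num

lemma sum_neighborSet_distU1 {n : ℕ} {u : Pt} (hu : u ∈ corners) (hu1 : u ≠ u1) :
    ∑ᶠ y ∈ (SG n).neighborSet u, (distU1 n y : ℝ) = 2 * 2 ^ n - 1 := by
  induction n with
  | zero =>
    rcases hu with rfl | rfl | rfl
    · exact absurd rfl hu1
    · rw [neighborSet_zero_u2, finsum_mem_pair u1_ne_u3, distU1_u1, distU1_u3]; norm_num
    · rw [neighborSet_zero_u3, finsum_mem_pair u1_ne_u2, distU1_u1, distU1_u2]; norm_num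
  | succ n ih =>
    rw [sum_neighborSet_distU1_succ hu, distU1_corner_of_ne hu hu1, ih]
    push_cast
    ring

lemma lap_distU1_cell_corner {n : ℕ} {u v : Pt} (hu : u ∈ corners) (hv : v ∈ corners)
    (huv : u ≠ v) :
    lap (n+1) (fun y => (distU1 (n+1) y : ℝ)) (cell u v) =
      8 - 3 * (M (n+1) 2 2 2 (cell u v) : ℝ) := by
  rw [lap_cell_corner hu hv huv, sum_neighborSet_distU1_cell hu hv,
    sum_neighborSet_distU1_cell hv hu, distU1_cell hu (corners_subset_V n hv),
    M_cell_corner hu hv huv]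
  push_cast
  by_cases hu1 : u = u1
  · subst hu1
    rw [distU1_u1, sum_neighborSet_u1_distU1, distU1_corner_of_ne hv huv.symm,
      sum_neighborSet_distU1 hv huv.symm, if_pos (Or.inl rfl)]
    push_cast; ring
  by_cases hv1 : v = u1
  · subst hv1
    rw [distU1_u1, sum_neighborSet_u1_distU1, distU1_corner_of_ne hu huv,
      sum_neighborSet_distU1 hu huv, if_pos (Or.inr rfl)]
    push_cast; ring
  · rw [distU1_corner_of_ne hu hu1, distU1_corner_of_ne hv hv1, sum_neighborSet_distU1 hu hu1,
      sum_neighborSet_distU1 hv hv1, if_neg (by tauto)]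
    push_cast; ring

lemma lap_distU1 {n : ℕ} {x : Pt} (hx : x ∈ V n) (hxc : x ∉ corners) :
    lap n (fun y => (distU1 n y : ℝ)) x = 8 - 3 * (M n 2 2 2 x : ℝ) := by
  induction n generalizing x with
  | zero => exact absurd hx hxc
  | succ n ih =>
    rcases cell_cases hx hxc with ⟨u, hu, v, hv, huv, rfl⟩ | ⟨u, hu, z, hz, hzc, rfl⟩
    · exact lap_distU1_cell_corner hu hv huv
    obtain ⟨m, rfl⟩ := Nat.exists_eq_succ_of_ne_zero (n := n) (by rintro rfl; exact hzc hz)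
    rw [lap_comp (cell_injective u) (neighborSet_cell hu hz (fun h => absurd h hzc)),
      lap_congr hz (fun y hy => by rw [distU1_cell hu hy, Nat.cast_add]),
      lap_const_add hz hzc, ih hz hzc, M_cell hu hz hzc]

lemma lap_dcorner_cell {m k : ℕ} {u z : Pt} (hu : u ∈ corners) (hk : rotccw^[k] u = u1)
    (hz : z ∈ V (m+1)) (hzc : z ∉ corners) :
    lap (m+2) (fun y => (dcorner (m+2) y : ℝ)) (cell u z) =
      8 - 3 * (M (m+1) 2 2 2 (rotccw^[k] z) : ℝ) := by
  rw [lap_comp (cell_injective u) (neighborSet_cell hu hz (fun h => absurd h hzc)),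
    lap_congr hz (fun y hy => by rw [dcorner_cell hu hk hy]),
    ← lap_comp (f := fun y => (distU1 (m+1) y : ℝ)) (rotccw_injective.iterate k)
      (neighborSet_iterate_rotccw k z)]
  exact lap_distU1 (iterate_rotccw_mem_V k hz) ((iterate_rotccw_mem_corners_iff k).not.2 hzc)

lemma sum_neighborSet_dcorner_cell {n : ℕ} {u v : Pt} (hu : u ∈ corners) (hv : v ∈ corners)
    (huv : u ≠ v) :
    ∑ᶠ y ∈ (SG n).neighborSet v, (dcorner (n+1) (cell u y) : ℝ) = 2 * 2 ^ n - 1 := by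
  obtain ⟨k, hk⟩ := exists_iterate_rotccw_eq_u1 hu
  have hkv : rotccw^[k] v ≠ u1 := hk ▸ (rotccw_injective.iterate k).ne huv.symm
  rw [finsum_mem_congr rfl fun y hy => by rw [dcorner_cell hu hk (neighborSet_subset_V v hy)],
    ← finsum_mem_image (f := fun y => (distU1 n y : ℝ)) (rotccw_injective.iterate k).injOn,
    ← neighborSet_iterate_rotccw,
    sum_neighborSet_distU1 (iterate_rotccw_mem_corners k hv) hkv]

lemma lap_dcorner_cell_corner {n : ℕ} {u v : Pt} (hu : u ∈ corners) (hv : v ∈ corners)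
    (huv : u ≠ v) : lap (n+1) (fun y => (dcorner (n+1) y : ℝ)) (cell u v) = 2 := by
  rw [lap_cell_corner hu hv huv, sum_neighborSet_dcorner_cell hu hv huv,
    sum_neighborSet_dcorner_cell hv hu huv.symm, dcorner_cell_corner hu hv huv]
  push_cast
  ring

end Gasket

/-- For every `n ≥ 2` and every non-corner vertex `x ∈ V_{SG_n}`,
`Δ_n d_n(x) = 8 − 3·id_n(x)`. -/
theorem lap_dcorner_eq (n : ℕ) (hn : 2 ≤ n) :
    ∀ x ∈ V n, x ∉ corners →
      lap n (fun y => (dcorner n y : ℝ)) x = 8 - 3 * (sandId n x : ℝ) := by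
  obtain ⟨m, rfl⟩ : ∃ m, n = m + 2 := ⟨n - 2, by omega⟩
  intro x hx hxc
  rcases Gasket.cell_cases hx hxc with ⟨u, hu, v, hv, huv, rfl⟩ | ⟨u, hu, z, hz, hzc, rfl⟩
  · rw [Gasket.lap_dcorner_cell_corner hu hv huv, Gasket.sandId_cell_corner hu hv huv]
    norm_num
  · obtain ⟨k, hk, hid⟩ := Gasket.exists_sandId_cell hu hz hzc
    rw [hid]
    exact Gasket.lap_dcorner_cell hu hk hz hzc
end
end

section
/- For every n, if f:V_{SG_n}→ℝ satisfies Δ_n f(x) = 0 for every non-corner vertex x of SG_n and f(u_1)=f(u_2)=f(u_3)=0, then f(x)=0 for all x ∈ V_{SG_n}. -/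
open scoped Classical BigOperators ENNReal

noncomputable section

/-!
Maximum principle. A vertex of `SG (n + 1)` lies in at most two of the three cells, and if in
two then it is a corner of both, where it has two neighbours; hence every vertex has at most four
neighbours. At a maximum `M ≥ 0` of a harmonic `f`, `4 M` is the sum of at most four values
`≤ M`, so all neighbours take the value `M` too. As `SG n` is connected, a positive maximum
propagates to a corner, where `f ≤ 0`. Applied to `f` and `-f` this gives `f = 0`.
-/

lemma Finset.forall_eq_of_mul_le_sum {ι : Type*} {s : Finset ι} {f : ι → ℝ} {M c : ℝ}
    (hcard : (s.card : ℝ) ≤ c) (hM : 0 ≤ M) (hle : ∀ i ∈ s, f i ≤ M)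
    (hsum : c * M ≤ ∑ i ∈ s, f i) : ∀ i ∈ s, f i = M := by
  have hupper : ∑ i ∈ s, f i ≤ ∑ _i ∈ s, M := Finset.sum_le_sum hle
  have hconst : ∑ _i ∈ s, M ≤ c * M := by
    rw [Finset.sum_const, nsmul_eq_mul]; exact mul_le_mul_of_nonneg_right hcard hM
  exact (Finset.sum_eq_sum_iff_of_le hle).1 (by linarith)

lemma SimpleGraph.Reachable.exists_mem_inter {α : Type*} {G : SimpleGraph α} {B S : Set α}
    (hS : ∀ x ∈ S, x ∉ B → ∀ y, G.Adj x y → y ∈ S) {x b : α} (h : G.Reachable x b)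
    (hb : b ∈ B) (hx : x ∈ S) : (S ∩ B).Nonempty := by
  obtain ⟨w⟩ := h
  induction w with
  | nil => exact ⟨_, hx, hb⟩
  | @cons u v _ hadj _ ih =>
    by_cases hu : u ∈ B
    · exact ⟨u, hx, hu⟩
    · exact ih hb (hS u hx hu v hadj)

lemma u1_eq_zero : u1 = 0 := rfl

lemma u1_ne_u2 : u1 ≠ u2 := by
  simp [u1, u2]

lemma u1_ne_u3 : u1 ≠ u3 := by
  simp [u1, u3]

lemma u2_ne_u3 : u2 ≠ u3 := by
  simp [u2, u3]

lemma u1_mem_corners : u1 ∈ corners := by simp [corners]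

lemma u2_mem_corners : u2 ∈ corners := by simp [corners]

lemma u3_mem_corners : u3 ∈ corners := by simp [corners]

/-- The contraction `F_c p = (c + p) / 2` onto the cell of the gasket at the corner `c`. -/
def sgMap (c p : Pt) : Pt := (2:ℝ)⁻¹ • (c + p)

lemma two_smul_sgMap_sub (c p : Pt) : (2:ℝ) • sgMap c p - c = p := by
  simp [sgMap, smul_smul]

lemma sgMap_two_smul_sub (c x : Pt) : sgMap c ((2:ℝ) • x - c) = x := by
  simp [sgMap, smul_smul]

lemma exists_mem_corners {P : Pt → Prop} : (∃ c ∈ corners, P c) ↔ P u1 ∨ P u2 ∨ P u3 := by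
  simp [corners]

lemma mem_V_succ {n : ℕ} {x : Pt} : x ∈ V (n + 1) ↔ ∃ c ∈ corners, (2:ℝ) • x - c ∈ V n := by
  simp only [V, Set.mem_image, Set.mem_union, exists_mem_corners]
  constructor
  · rintro ⟨p, (hp | ⟨q, hq, rfl⟩) | ⟨q, hq, rfl⟩, rfl⟩
    · exact Or.inl (by simpa [smul_smul, u1_eq_zero] using hp)
    · exact Or.inr (Or.inl (by simpa [smul_smul] using hq))
    · exact Or.inr (Or.inr (by simpa [smul_smul] using hq))
  · rintro (h | h | h)
    · exact ⟨_, Or.inl (Or.inl h), by simp [smul_smul, u1_eq_zero]⟩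
    · exact ⟨_, Or.inl (Or.inr ⟨_, h, rfl⟩), sgMap_two_smul_sub u2 x⟩
    · exact ⟨_, Or.inr ⟨_, h, rfl⟩, sgMap_two_smul_sub u3 x⟩

lemma mem_Ed_succ {n : ℕ} {a b : Pt} :
    (a, b) ∈ Ed (n + 1) ↔ ∃ c ∈ corners, ((2:ℝ) • a - c, (2:ℝ) • b - c) ∈ Ed n := by
  simp only [Ed, Set.mem_image, Set.mem_union, exists_mem_corners]
  constructor
  · rintro ⟨⟨p, q⟩, (hpq | ⟨⟨p', q'⟩, hpq, he⟩) | ⟨⟨p', q'⟩, hpq, he⟩, hab⟩ <;>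
      simp only [Prod.mk.injEq] at hab <;> obtain ⟨rfl, rfl⟩ := hab
    · exact Or.inl (by simpa [smul_smul, u1_eq_zero] using hpq)
    · simp only [Prod.mk.injEq] at he
      obtain ⟨rfl, rfl⟩ := he
      exact Or.inr (Or.inl (by simpa [smul_smul] using hpq))
    · simp only [Prod.mk.injEq] at he
      obtain ⟨rfl, rfl⟩ := he
      exact Or.inr (Or.inr (by simpa [smul_smul] using hpq))
  · rintro (h | h | h)
    · exact ⟨_, Or.inl (Or.inl h), by simp [smul_smul, u1_eq_zero]⟩
    · exact ⟨_, Or.inl (Or.inr ⟨_, h, rfl⟩), Prod.ext (sgMap_two_smul_sub u2 a)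
        (sgMap_two_smul_sub u2 b)⟩
    · exact ⟨_, Or.inr ⟨_, h, rfl⟩, Prod.ext (sgMap_two_smul_sub u3 a)
        (sgMap_two_smul_sub u3 b)⟩

lemma SG_succ_adj_iff {n : ℕ} {x y : Pt} :
    (SG (n + 1)).Adj x y ↔ ∃ c ∈ corners, (SG n).Adj ((2:ℝ) • x - c) ((2:ℝ) • y - c) := by
  have hne : ∀ c : Pt, (2:ℝ) • x - c ≠ (2:ℝ) • y - c ↔ x ≠ y := fun c => by
    rw [ne_eq, sub_left_inj, smul_right_inj two_ne_zero]
  simp only [SG, mem_Ed_succ, hne]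
  constructor
  · rintro ⟨⟨c, hc, h⟩ | ⟨c, hc, h⟩, hxy⟩
    exacts [⟨c, hc, Or.inl h, hxy⟩, ⟨c, hc, Or.inr h, hxy⟩]
  · rintro ⟨c, hc, h | h, hxy⟩
    exacts [⟨Or.inl ⟨c, hc, h⟩, hxy⟩, ⟨Or.inr ⟨c, hc, h⟩, hxy⟩]

lemma corners_subset_V (n : ℕ) : corners ⊆ V n := by
  induction n with
  | zero => exact subset_rfl
  | succ n ih =>
    intro c hc
    refine mem_V_succ.2 ⟨c, hc, ?_⟩
    rw [two_smul, add_sub_cancel_right]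
    exact ih hc

lemma V_finite (n : ℕ) : (V n).Finite := by
  induction n with
  | zero => simp [V]
  | succ n ih => exact ((ih.union (ih.image _)).union (ih.image _)).image _

lemma mem_V_of_adj {n : ℕ} {x y : Pt} (h : (SG n).Adj x y) : y ∈ V n := by
  induction n generalizing x y with
  | zero =>
    obtain ⟨hxy | hxy, -⟩ := h <;>
    · simp only [Ed, Set.mem_insert_iff, Set.mem_singleton_iff, Prod.mk.injEq] at hxy
      rcases hxy with ⟨rfl, rfl⟩ | ⟨rfl, rfl⟩ | ⟨rfl, rfl⟩ <;> simp [V]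
  | succ n ih =>
    obtain ⟨c, hc, h⟩ := SG_succ_adj_iff.1 h
    exact mem_V_succ.2 ⟨c, hc, ih h⟩

def sgHom (n : ℕ) {c : Pt} (hc : c ∈ corners) : SG n →g SG (n + 1) where
  toFun := sgMap c
  map_rel' h := SG_succ_adj_iff.2 ⟨c, hc, by rwa [two_smul_sgMap_sub, two_smul_sgMap_sub]⟩

lemma reachable_u1 {n : ℕ} {x : Pt} (hx : x ∈ V n) : (SG n).Reachable x u1 := by
  induction n generalizing x with
  | zero =>
    rcases hx with rfl | rfl | rfl
    · rfl
    · exact SimpleGraph.Adj.reachable ⟨Or.inr (Or.inl rfl), u1_ne_u2.symm⟩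
    · exact SimpleGraph.Adj.reachable ⟨Or.inr (Or.inr (Or.inr rfl)), u1_ne_u3.symm⟩
  | succ n ih =>
    obtain ⟨c, hc, hxc⟩ := mem_V_succ.1 hx
    have hx_c : (SG (n + 1)).Reachable (sgMap c ((2:ℝ) • x - c)) (sgMap c u1) :=
      (ih hxc).map (sgHom n hc)
    have hc_u1 : (SG (n + 1)).Reachable (sgMap u1 c) (sgMap u1 u1) :=
      (ih (corners_subset_V n hc)).map (sgHom n u1_mem_corners)
    rw [sgMap_two_smul_sub] at hx_c
    rw [sgMap, add_comm u1 c, ← sgMap] at hc_u1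
    simpa [sgMap, u1_eq_zero] using hx_c.trans hc_u1

lemma mem_V_bounds {n : ℕ} {p : Pt} (hp : p ∈ V n) :
    0 ≤ p.2 ∧ p.2 ≤ √3 * p.1 ∧ p.2 ≤ √3 * (1 - p.1) := by
  have hs : 0 < √3 := by positivity
  induction n generalizing p with
  | zero =>
    rcases hp with rfl | rfl | rfl <;> simp only [u1, u2, u3] <;>
      refine ⟨by positivity, ?_, ?_⟩ <;> nlinarith
  | succ n ih =>
    obtain ⟨c, hc, hq⟩ := mem_V_succ.1 hp
    obtain ⟨h0, h1, h2⟩ := ih hq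
    rcases hc with rfl | rfl | rfl <;>
      simp only [u1, u2, u3, Prod.fst_sub, Prod.snd_sub, Prod.smul_fst, Prod.smul_snd,
        smul_eq_mul] at h0 h1 h2 <;>
      refine ⟨by nlinarith, by nlinarith, by nlinarith⟩

/-- `V n` lies in the triangle `T` spanned by the corners, and `c + T`, `c' + T` meet only
at `c + c'`. -/
lemma eq_of_add_eq_add_of_mem_V {n : ℕ} {c c' p q : Pt} (hc : c ∈ corners) (hc' : c' ∈ corners)
    (hne : c ≠ c') (hp : p ∈ V n) (hq : q ∈ V n) (h : c + p = c' + q) : p = c' := by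
  have hs : 0 < √3 := by positivity
  have h3 : √3 * √3 = 3 := Real.mul_self_sqrt (by norm_num)
  obtain ⟨p0, p1, p2⟩ := mem_V_bounds hp
  obtain ⟨q0, q1, q2⟩ := mem_V_bounds hq
  have e1 := congrArg Prod.fst h
  have e2 := congrArg Prod.snd h
  rcases hc with rfl | rfl | rfl <;> rcases hc' with rfl | rfl | rfl <;>
    first
    | exact absurd rfl hne
    | simp only [u1, u2, u3, Prod.fst_add, Prod.snd_add] at e1 e2 ⊢
      refine Prod.ext ?_ ?_ <;> nlinarith

lemma sgMap_injective (c : Pt) : Function.Injective (sgMap c) :=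
  Function.LeftInverse.injective (g := fun p => (2:ℝ) • p - c) (two_smul_sgMap_sub c)

lemma neighborSet_succ (n : ℕ) (x : Pt) :
    (SG (n + 1)).neighborSet x = ⋃ c ∈ corners, sgMap c '' (SG n).neighborSet ((2:ℝ) • x - c) := by
  ext y
  simp only [SimpleGraph.mem_neighborSet, SG_succ_adj_iff, Set.mem_iUnion, Set.mem_image,
    exists_prop]
  refine exists_congr fun c => and_congr_right fun _ =>
    ⟨fun h => ⟨_, h, sgMap_two_smul_sub c y⟩, ?_⟩
  rintro ⟨z, hz, rfl⟩
  rwa [two_smul_sgMap_sub]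

lemma ncard_neighborSet_succ_le (n : ℕ) (x : Pt) :
    ((SG (n + 1)).neighborSet x).ncard ≤ ((SG n).neighborSet ((2:ℝ) • x - u1)).ncard +
      ((SG n).neighborSet ((2:ℝ) • x - u2)).ncard +
      ((SG n).neighborSet ((2:ℝ) • x - u3)).ncard := by
  simp only [neighborSet_succ, corners, Set.biUnion_insert, Set.biUnion_singleton]
  refine (Set.ncard_union_le _ _).trans ?_
  refine (Nat.add_le_add_left (Set.ncard_union_le _ _) _).trans_eq ?_
  simp only [Set.ncard_image_of_injective _ (sgMap_injective _), add_assoc]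

lemma mem_V_of_ncard_neighborSet_ne_zero {n : ℕ} {x : Pt}
    (h : ((SG n).neighborSet x).ncard ≠ 0) : x ∈ V n := by
  obtain ⟨y, hy⟩ := Set.nonempty_of_ncard_ne_zero h
  exact mem_V_of_adj hy.symm

lemma ncard_corners : corners.ncard = 3 :=
  Set.ncard_eq_three.2 ⟨u1, u2, u3, u1_ne_u2, u1_ne_u3, u2_ne_u3, rfl⟩

lemma corners_finite : corners.Finite := by
  simp [corners]

lemma neighborSet_zero_subset (x : Pt) : (SG 0).neighborSet x ⊆ corners \ {x} :=
  fun _ (hy : (SG 0).Adj x _) => ⟨mem_V_of_adj hy, hy.ne'⟩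

lemma ncard_neighborSet_succ_le_four {n : ℕ} (h4 : ∀ x, ((SG n).neighborSet x).ncard ≤ 4)
    (h2 : ∀ c ∈ corners, ((SG n).neighborSet c).ncard ≤ 2) (x : Pt) :
    ((SG (n + 1)).neighborSet x).ncard ≤ 4 := by
  set d : Pt → ℕ := fun c => ((SG n).neighborSet ((2:ℝ) • x - c)).ncard with hd
  have hmeet : ∀ c ∈ corners, ∀ c' ∈ corners, c ≠ c' → d c ≠ 0 → d c' ≠ 0 →
      (2:ℝ) • x - c = c' := fun c hc c' hc' hne h h' =>
    eq_of_add_eq_add_of_mem_V hc hc' hne (mem_V_of_ncard_neighborSet_ne_zero h)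
      (mem_V_of_ncard_neighborSet_ne_zero h') (by rw [add_sub_cancel, add_sub_cancel])
  have hcorner : ∀ c ∈ corners, ∀ c' ∈ corners, c ≠ c' → d c ≠ 0 → d c' ≠ 0 → d c ≤ 2 :=
    fun c hc c' hc' hne h h' => by
      simpa only [hd, hmeet c hc c' hc' hne h h'] using h2 c' hc'
  have hpair : ∀ c ∈ corners, ∀ c' ∈ corners, c ≠ c' → d c + d c' ≤ 4 := by
    intro c hc c' hc' hne
    have : d c ≤ 4 := h4 _
    have : d c' ≤ 4 := h4 _
    by_cases h : d c = 0
    · omega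
    by_cases h' : d c' = 0
    · omega
    have := hcorner c hc c' hc' hne h h'
    have := hcorner c' hc' c hc hne.symm h' h
    omega
  have hnot_three : d u1 = 0 ∨ d u2 = 0 ∨ d u3 = 0 := by
    by_contra! h
    exact u2_ne_u3 ((hmeet u1 u1_mem_corners u2 u2_mem_corners u1_ne_u2 h.1 h.2.1).symm.trans
      (hmeet u1 u1_mem_corners u3 u3_mem_corners u1_ne_u3 h.1 h.2.2))
  refine (ncard_neighborSet_succ_le n x).trans ?_
  show d u1 + d u2 + d u3 ≤ 4
  have := hpair u1 u1_mem_corners u2 u2_mem_corners u1_ne_u2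
  have := hpair u1 u1_mem_corners u3 u3_mem_corners u1_ne_u3
  have := hpair u2 u2_mem_corners u3 u3_mem_corners u2_ne_u3
  omega

lemma ncard_neighborSet_succ_le_two_of_mem_corners {n : ℕ}
    (h2 : ∀ c ∈ corners, ((SG n).neighborSet c).ncard ≤ 2) {c : Pt} (hc : c ∈ corners) :
    ((SG (n + 1)).neighborSet c).ncard ≤ 2 := by
  have hcc : (2:ℝ) • c - c = c := by rw [two_smul, add_sub_cancel_right]
  have hzero : ∀ c' ∈ corners, c' ≠ c → ((SG n).neighborSet ((2:ℝ) • c - c')).ncard = 0 := by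
    intro c' hc' hne
    by_contra h
    refine hne (hcc.symm.trans (eq_of_add_eq_add_of_mem_V hc hc' hne.symm ?_
      (mem_V_of_ncard_neighborSet_ne_zero h) (by rw [add_sub_cancel, add_sub_cancel]))).symm
    rw [hcc]
    exact corners_subset_V n hc
  have hself := h2 c hc
  rw [← hcc] at hself
  refine (ncard_neighborSet_succ_le n c).trans ?_
  rcases hc with rfl | rfl | rfl
  · rw [hzero u2 u2_mem_corners u1_ne_u2.symm, hzero u3 u3_mem_corners u1_ne_u3.symm]
    simpa using hself
  · rw [hzero u1 u1_mem_corners u1_ne_u2, hzero u3 u3_mem_corners u2_ne_u3.symm]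
    simpa using hself
  · rw [hzero u1 u1_mem_corners u1_ne_u3, hzero u2 u2_mem_corners u2_ne_u3]
    simpa using hself

lemma ncard_neighborSet_le (n : ℕ) :
    (∀ x, ((SG n).neighborSet x).ncard ≤ 4) ∧
      ∀ c ∈ corners, ((SG n).neighborSet c).ncard ≤ 2 := by
  induction n with
  | zero =>
    refine ⟨fun x => ?_, fun c hc => ?_⟩
    · calc _ ≤ (corners \ {x}).ncard := Set.ncard_le_ncard (neighborSet_zero_subset x)
            (corners_finite.subset Set.sdiff_subset)
        _ ≤ corners.ncard := Set.ncard_sdiff_singleton_le _ _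
        _ ≤ 4 := by rw [ncard_corners]; norm_num
    · calc _ ≤ (corners \ {c}).ncard := Set.ncard_le_ncard (neighborSet_zero_subset c)
            (corners_finite.subset Set.sdiff_subset)
        _ = 2 := by rw [Set.ncard_sdiff_singleton_of_mem hc, ncard_corners]
  | succ n ih =>
    exact ⟨ncard_neighborSet_succ_le_four ih.1 ih.2,
      fun _ => ncard_neighborSet_succ_le_two_of_mem_corners ih.2⟩

lemma neighborSet_finite (n : ℕ) (x : Pt) : ((SG n).neighborSet x).Finite :=
  (V_finite n).subset fun _ => mem_V_of_adj

lemma lap_eq_sum (n : ℕ) (f : Pt → ℝ) (x : Pt) :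
    lap n f x = 4 * f x - ∑ y ∈ (neighborSet_finite n x).toFinset, f y := by
  rw [lap, ← finsum_mem_eq_finite_toFinset_sum]
  rfl

lemma lap_neg (n : ℕ) (f : Pt → ℝ) (x : Pt) : lap n (-f) x = -lap n f x := by
  simp only [lap_eq_sum, Pi.neg_apply, Finset.sum_neg_distrib]
  ring

theorem nonpos_of_lap_eq_zero {n : ℕ} {f : Pt → ℝ}
    (hharm : ∀ x ∈ V n, x ∉ corners → lap n f x = 0) (hcorners : ∀ c ∈ corners, f c ≤ 0) :
    ∀ x ∈ V n, f x ≤ 0 := by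
  obtain ⟨m, hm, hmax⟩ :=
    Set.exists_max_image (V n) f (V_finite n) ⟨u1, corners_subset_V n u1_mem_corners⟩
  intro x hx
  by_contra! hpos
  have hM : 0 ≤ f m := (hpos.trans_le (hmax x hx)).le
  have hclosed : ∀ y ∈ {y ∈ V n | f y = f m}, y ∉ corners →
      ∀ z, (SG n).Adj y z → z ∈ {y ∈ V n | f y = f m} := by
    rintro y ⟨hyV, hym⟩ hyc z hz
    have hfin := neighborSet_finite n y
    refine ⟨mem_V_of_adj hz, Finset.forall_eq_of_mul_le_sum (c := 4) ?_ hM ?_ ?_ z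
      (hfin.mem_toFinset.2 hz)⟩
    · rw [← Set.ncard_eq_toFinset_card _ hfin]
      exact_mod_cast (ncard_neighborSet_le n).1 y
    · exact fun w hw => hmax w (mem_V_of_adj (hfin.mem_toFinset.1 hw))
    · have := hharm y hyV hyc
      rw [lap_eq_sum, hym] at this
      linarith
  obtain ⟨c, ⟨-, hcm⟩, hc⟩ := (reachable_u1 hm).exists_mem_inter hclosed u1_mem_corners ⟨hm, rfl⟩
  linarith [hcorners c hc, hmax x hx]

/-- If `f : V_{SG_n} → ℝ` has vanishing Laplacian at every non-corner vertex
and vanishes at the three corners, then `f = 0` on `V_{SG_n}`. -/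
theorem harmonic_zero_boundary_eq_zero (n : ℕ) (f : Pt → ℝ)
    (hharm : ∀ x ∈ V n, x ∉ corners → lap n f x = 0)
    (h1 : f u1 = 0) (h2 : f u2 = 0) (h3 : f u3 = 0) :
    ∀ x ∈ V n, f x = 0 := by
  have hle := nonpos_of_lap_eq_zero hharm (by rintro c (rfl | rfl | rfl) <;> simp [*])
  have hge := nonpos_of_lap_eq_zero (f := -f) (n := n)
    (fun x hx hxc => by rw [lap_neg, hharm x hx hxc, neg_zero])
    (by rintro c (rfl | rfl | rfl) <;> simp [*])
  exact fun x hx => le_antisymm (hle x hx) (neg_nonpos.1 (hge x hx))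
end
end
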